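/- arXiv:2110.05194 — 4 statements merged into one kernel-verified Lean document; each statement's English description precedes it below -/
import Mathlib

section
/- If a and b are coprime integers and n is an odd integer greater than one, then every integer d dividing both a + b and λ_n(a,b) also divides n. -/
/-
Modulo a + b we have b ≡ -a, so every term (-1)^i a^(n-1-i) b^i of λ_n(a,b) is congruent to
a^(n-1) and λ_n(a,b) ≡ n a^(n-1). Hence d ∣ n a^(n-1); and d, dividing a + b, is coprime to a,
so d ∣ n.
-/

def lambdaPoly (n : ℕ) (a b : ℤ) : ℤ :=
  ∑ i ∈ Finset.range n, (-1) ^ i * a ^ (n - 1 - i) * b ^ i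

theorem lambdaPoly_modEq_add (n : ℕ) (a b : ℤ) :
    lambdaPoly n a b ≡ n * a ^ (n - 1) [ZMOD a + b] := by
  have hb : b ≡ -a [ZMOD a + b] := Int.modEq_iff_dvd.2 ⟨-1, by ring⟩
  have hterm : ∀ i ∈ Finset.range n,
      (-1) ^ i * a ^ (n - 1 - i) * b ^ i ≡ a ^ (n - 1) [ZMOD a + b] := by
    intro i hin
    have hi : i ≤ n - 1 := Nat.le_sub_one_of_lt (Finset.mem_range.1 hin)
    calc (-1) ^ i * a ^ (n - 1 - i) * b ^ i
        ≡ (-1) ^ i * a ^ (n - 1 - i) * (-a) ^ i [ZMOD a + b] := (hb.pow i).mul_left _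
      _ = a ^ (n - 1 - i) * ((-1) ^ i * (-a) ^ i) := by ring
      _ = a ^ (n - 1) := by
        rw [← mul_pow, neg_one_mul, neg_neg, ← pow_add, Nat.sub_add_cancel hi]
  simpa [lambdaPoly] using Int.ModEq.sum hterm

theorem IsCoprime.add_left_self {R : Type*} [CommRing R] {a b : R} (h : IsCoprime a b) :
    IsCoprime (a + b) a := by
  simpa [add_comm] using h.symm.add_mul_left_left 1

theorem stmt_12_general (a b : ℤ) (h : IsCoprime a b) (n : ℕ)
    (d : ℤ) (hd1 : d ∣ a + b) (hd2 : d ∣ lambdaPoly n a b) : d ∣ (n : ℤ) := by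
  have hdiv : d ∣ n * a ^ (n - 1) :=
    ((lambdaPoly_modEq_add n a b).of_dvd hd1).dvd_iff.1 hd2
  have hcop : IsCoprime d a := h.add_left_self.of_isCoprime_of_dvd_left hd1
  exact hcop.pow_right.dvd_of_dvd_mul_right hdiv

theorem stmt_12 (a b : ℤ) (h : IsCoprime a b) (n : ℕ) (hn : Odd n) (hn1 : 1 < n)
    (d : ℤ) (hd1 : d ∣ a + b) (hd2 : d ∣ lambdaPoly n a b) : d ∣ (n : ℤ) :=
  stmt_12_general a b h n d hd1 hd2
end

section
/- Let a and b be coprime integers and n an odd prime. If p is a prime with p ≠ n and p divides λ_n(a,b), then p ≡ 1 (mod n). -/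
open Finset

lemma lambdaPoly_eq_geom_sum₂ (n : ℕ) (a b : ℤ) :
    lambdaPoly n a b = ∑ i ∈ range n, (-b) ^ i * a ^ (n - 1 - i) :=
  sum_congr rfl fun i _ => by rw [neg_pow]; ring

lemma pow_eq_pow_of_geom_sum₂_eq_zero {R : Type*} [CommRing R] {x y : R} {n : ℕ}
    (h : ∑ i ∈ range n, x ^ i * y ^ (n - 1 - i) = 0) : x ^ n = y ^ n := by
  rw [← sub_eq_zero, ← geom_sum₂_mul, h, zero_mul]

lemma orderOf_div_eq_of_geom_sum₂_eq_zero {K : Type*} [Field K] {x y : K} {n : ℕ}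
    (hn : n.Prime) (hnK : (n : K) ≠ 0) (hy : y ≠ 0)
    (h : ∑ i ∈ range n, x ^ i * y ^ (n - 1 - i) = 0) : orderOf (x / y) = n := by
  have := Fact.mk hn
  apply orderOf_eq_prime
  · rw [div_pow, pow_eq_pow_of_geom_sum₂_eq_zero h, div_self (pow_ne_zero n hy)]
  · intro hxy
    rw [(div_eq_one_iff_eq hy).1 hxy, geom_sum₂_self] at h
    exact mul_ne_zero hnK (pow_ne_zero _ hy) h

theorem stmt_14_general (a b : ℤ) (h : IsCoprime a b) (n : ℕ) (hn : n.Prime)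
    (p : ℕ) (hp : p.Prime) (hpn : p ≠ n) (hdvd : (p : ℤ) ∣ lambdaPoly n a b) :
    p ≡ 1 [MOD n] := by
  have := Fact.mk hp
  have hsum : ∑ i ∈ range n, (-(b : ZMod p)) ^ i * (a : ZMod p) ^ (n - 1 - i) = 0 := by
    have := (ZMod.intCast_zmod_eq_zero_iff_dvd _ p).2 hdvd
    push_cast [lambdaPoly_eq_geom_sum₂] at this
    exact this
  have ha : (a : ZMod p) ≠ 0 := by
    intro ha
    have hb : (b : ZMod p) = 0 := by
      simpa [ha, hn.ne_zero] using pow_eq_pow_of_geom_sum₂_eq_zero hsum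
    rw [ZMod.intCast_zmod_eq_zero_iff_dvd] at ha hb
    exact (Nat.prime_iff_prime_int.mp hp).not_isUnit (h.isUnit_of_dvd' ha hb)
  have hnp : (n : ZMod p) ≠ 0 := by
    rwa [Ne, ZMod.natCast_eq_zero_iff, Nat.prime_dvd_prime_iff_eq hp hn]
  have hord := orderOf_div_eq_of_geom_sum₂_eq_zero hn hnp ha hsum
  have hne : -(b : ZMod p) / a ≠ 0 := by
    intro h0
    rw [h0, orderOf_zero] at hord
    exact hn.ne_zero hord.symm
  exact ((Nat.modEq_iff_dvd' hp.one_le).2 (hord ▸ ZMod.orderOf_dvd_card_sub_one hne)).symm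

theorem stmt_14 (a b : ℤ) (h : IsCoprime a b) (n : ℕ) (hn : n.Prime) (hodd : Odd n)
    (p : ℕ) (hp : p.Prime) (hpn : p ≠ n) (hdvd : (p : ℤ) ∣ lambdaPoly n a b) :
    p ≡ 1 [MOD n] :=
  stmt_14_general a b h n hn p hp hpn hdvd
end

section
/- Let a and b be coprime integers and n an odd prime. If p is a prime with p ≠ n and p divides λ_n(a,b), then p > n. -/
/-!
Reduce modulo `p`: with `x = -b` and `y = a`, `λ_n(a, b) = ∑ xⁱ yⁿ⁻¹⁻ⁱ`, and multiplying by
`x - y` shows `xⁿ = yⁿ` in `ZMod p`. Coprimality forces `y ≠ 0`, and `x = y` is impossible since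
then the sum is `n yⁿ⁻¹` with `p ∤ n`. Hence `x / y` has multiplicative order exactly the prime
`n`, which divides `p - 1`.
-/

open Finset

lemma IsCoprime.right_ne_zero_of_geom_sum₂_eq_zero {R : Type*} [CommRing R] [IsDomain R]
    {x y : R} {n : ℕ} (hxy : IsCoprime x y) (hn : n ≠ 0)
    (h : ∑ i ∈ range n, x ^ i * y ^ (n - 1 - i) = 0) : y ≠ 0 := by
  rintro rfl
  have hx : x = 0 := by simpa [hn] using pow_eq_pow_of_geom_sum₂_eq_zero h
  subst hx
  exact not_isUnit_zero (isCoprime_zero_left.mp hxy)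

theorem stmt_15_general (a b : ℤ) (h : IsCoprime a b) (n : ℕ) (hn : n.Prime)
    (p : ℕ) (hp : p.Prime) (hpn : p ≠ n) (hdvd : (p : ℤ) ∣ lambdaPoly n a b) :
    p > n := by
  have := Fact.mk hp
  have hsum : ∑ i ∈ range n, (-(b : ZMod p)) ^ i * (a : ZMod p) ^ (n - 1 - i) = 0 := by
    simpa [lambdaPoly_eq_geom_sum₂] using (ZMod.intCast_zmod_eq_zero_iff_dvd _ p).mpr hdvd
  have hcop : IsCoprime (-(b : ZMod p)) (a : ZMod p) := by
    simpa using h.symm.neg_left.map (Int.castRingHom (ZMod p))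
  have ha : (a : ZMod p) ≠ 0 := hcop.right_ne_zero_of_geom_sum₂_eq_zero hn.ne_zero hsum
  have hnp : (n : ZMod p) ≠ 0 := fun h0 =>
    hpn ((Nat.prime_dvd_prime_iff_eq hp hn).mp ((ZMod.natCast_eq_zero_iff n p).mp h0))
  rw [← orderOf_div_eq_of_geom_sum₂_eq_zero hn hnp ha hsum]
  exact ZMod.orderOf_lt hp.one_lt _

theorem stmt_15 (a b : ℤ) (h : IsCoprime a b) (n : ℕ) (hn : n.Prime) (hodd : Odd n)
    (p : ℕ) (hp : p.Prime) (hpn : p ≠ n) (hdvd : (p : ℤ) ∣ lambdaPoly n a b) :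
    p > n :=
  stmt_15_general a b h n hn p hp hpn hdvd
end

section
/- Let a and b be coprime integers and n an odd prime. If n does not divide λ_n(a,b), then λ_n(a,b) ≡ 1 (mod n). -/
lemma lambdaPoly_mul_add {n : ℕ} (hodd : Odd n) (a b : ℤ) :
    lambdaPoly n a b * (a + b) = a ^ n + b ^ n := by
  have hgeom : lambdaPoly n a b = ∑ i ∈ Finset.range n, (-b) ^ i * a ^ (n - 1 - i) :=
    Finset.sum_congr rfl fun i _ => by ring
  calc lambdaPoly n a b * (a + b)
      = -((∑ i ∈ Finset.range n, (-b) ^ i * a ^ (n - 1 - i)) * (-b - a)) := by rw [hgeom]; ring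
    _ = -((-b) ^ n - a ^ n) := by rw [geom_sum₂_mul]
    _ = a ^ n + b ^ n := by rw [hodd.neg_pow]; ring

lemma lambdaPoly_neg_right (n : ℕ) (a : ℤ) : lambdaPoly n a (-a) = n * a ^ (n - 1) := by
  rw [lambdaPoly, Finset.sum_congr rfl (g := fun _ => a ^ (n - 1)), Finset.sum_const,
    Finset.card_range, nsmul_eq_mul]
  intro i hi
  have hi : i ≤ n - 1 := Nat.le_sub_one_of_lt (Finset.mem_range.mp hi)
  calc (-1) ^ i * a ^ (n - 1 - i) * (-a) ^ i = ((-1) * (-1)) ^ i * a ^ (n - 1 - i + i) := by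
        rw [neg_pow, mul_pow, pow_add]; ring
    _ = a ^ (n - 1) := by rw [Nat.sub_add_cancel hi]; norm_num

lemma lambdaPoly_modEq_right {m : ℤ} (n : ℕ) (a : ℤ) {b b' : ℤ} (hb : b ≡ b' [ZMOD m]) :
    lambdaPoly n a b ≡ lambdaPoly n a b' [ZMOD m] :=
  Int.ModEq.sum fun i _ => (hb.pow i).mul_left _

lemma dvd_lambdaPoly_of_dvd_add {n : ℕ} {a b : ℤ} (h : (n : ℤ) ∣ a + b) :
    (n : ℤ) ∣ lambdaPoly n a b := by
  have hb : b ≡ -a [ZMOD n] :=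
    Int.modEq_iff_dvd.mpr (by rw [show -a - b = -(a + b) by ring]; exact h.neg_right)
  refine Int.modEq_zero_iff_dvd.mp ?_
  calc lambdaPoly n a b ≡ lambdaPoly n a (-a) [ZMOD n] := lambdaPoly_modEq_right n a hb
    _ = n * a ^ (n - 1) := lambdaPoly_neg_right n a
    _ ≡ 0 [ZMOD n] := Int.modEq_zero_iff_dvd.mpr (dvd_mul_right _ _)

theorem stmt_17_general (a b : ℤ) (n : ℕ) (hn : n.Prime) (hodd : Odd n)
    (hndvd : ¬ (n : ℤ) ∣ lambdaPoly n a b) :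
    lambdaPoly n a b ≡ 1 [ZMOD (n : ℤ)] := by
  have : Fact n.Prime := ⟨hn⟩
  have hab : ((a + b : ℤ) : ZMod n) ≠ 0 := by
    rw [Ne, ZMod.intCast_zmod_eq_zero_iff_dvd]
    exact fun h => hndvd (dvd_lambdaPoly_of_dvd_add h)
  have hfermat : (lambdaPoly n a b : ZMod n) * ((a + b : ℤ) : ZMod n) = ((a + b : ℤ) : ZMod n) := by
    rw [← Int.cast_mul, lambdaPoly_mul_add hodd]
    push_cast
    rw [ZMod.pow_card, ZMod.pow_card]
  rw [← ZMod.intCast_eq_intCast_iff, Int.cast_one]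
  exact mul_right_cancel₀ hab (hfermat.trans (one_mul _).symm)

theorem stmt_17 (a b : ℤ) (h : IsCoprime a b) (n : ℕ) (hn : n.Prime) (hodd : Odd n)
    (hndvd : ¬ (n : ℤ) ∣ lambdaPoly n a b) :
    lambdaPoly n a b ≡ 1 [ZMOD (n : ℤ)] :=
  stmt_17_general a b n hn hodd hndvd
end
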